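/- Let R be a commutative noetherian ring and X a full subcategory of finitely generated R-modules closed under images and extensions (an IE-closed subcategory). Then X is closed under submodules, i.e., X is a torsionfree class. -/

import Mathlib

open Submodule LinearMap

/-- A linear equivalence between any two subsingleton modules. -/
def subsingletonLEquiv (R A B : Type*) [Semiring R] [AddCommMonoid A] [Module R A]
    [AddCommMonoid B] [Module R B] [Subsingleton A] [Subsingleton B] : A ≃ₗ[R] B where
  toFun _ := 0
  invFun _ := 0
  left_inv _ := Subsingleton.elim _ _
  right_inv _ := Subsingleton.elim _ _
  map_add' _ _ := by simp
  map_smul' _ _ := by simp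

/-- `Fin (n+1) → W` is linearly equivalent to `W × (Fin n → W)`. -/
def piFinSuccLEquiv (R W : Type*) [Semiring R] [AddCommMonoid W] [Module R W] (n : ℕ) :
    (Fin (n + 1) → W) ≃ₗ[R] W × (Fin n → W) :=
  { (Fin.consEquiv fun _ : Fin (n + 1) => W).symm with
    map_add' := fun _ _ => rfl
    map_smul' := fun _ _ => rfl }

/-- Over a commutative noetherian ring, an IE-closed subcategory of finitely generated
modules (an isomorphism-closed full subcategory closed under images and extensions) is
closed under submodules, i.e. it is a torsionfree class. -/
theorem ie_closed_is_torsionfree_class (R : Type) [CommRing R] [IsNoetherianRing R]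
    (X : ∀ (M : Type) [AddCommGroup M] [Module R M], Prop)
    (hfg : ∀ (M : Type) [AddCommGroup M] [Module R M], X M → Module.Finite R M)
    (hiso : ∀ (M N : Type) [AddCommGroup M] [Module R M] [AddCommGroup N] [Module R N],
      (M ≃ₗ[R] N) → X M → X N)
    (himg : ∀ (M N : Type) [AddCommGroup M] [Module R M] [AddCommGroup N] [Module R N]
      (f : M →ₗ[R] N), X M → X N → X ↥(LinearMap.range f))
    (hext : ∀ (A B C : Type) [AddCommGroup A] [Module R A] [AddCommGroup B] [Module R B]
        [AddCommGroup C] [Module R C] (f : A →ₗ[R] B) (g : B →ₗ[R] C),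
      Function.Injective f → Function.Surjective g → Function.Exact f g → X A → X C → X B) :
    ∀ (M : Type) [AddCommGroup M] [Module R M] (N : Submodule R M), X M → X ↥N := by
  intro M _ _ N hM
  -- X is closed under binary products
  have hprod : ∀ (A B : Type) [AddCommGroup A] [Module R A] [AddCommGroup B] [Module R B],
      X A → X B → X (A × B) := by
    intro A B _ _ _ _ hA hB
    exact hext A (A × B) B (LinearMap.inl R A B) (LinearMap.snd R A B)
      LinearMap.inl_injective LinearMap.snd_surjective (Function.Exact.inl_snd) hA hB
  -- the zero module (as the bottom submodule of M) is in X
  have hbot : X ↥(⊥ : Submodule R M) := by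
    have h0 := himg M M 0 hM hM
    rwa [LinearMap.range_zero] at h0
  haveI : Subsingleton ↥(⊥ : Submodule R M) :=
    ⟨fun a b => Subtype.ext (((mem_bot R).1 a.2).trans ((mem_bot R).1 b.2).symm)⟩
  -- X is closed under finite powers
  have hpi : ∀ (k : ℕ) (W : Type) [AddCommGroup W] [Module R W], X W → X (Fin k → W) := by
    intro k
    induction k with
    | zero =>
      intro W _ _ _
      haveI : Subsingleton (Fin 0 → W) := ⟨fun f g => funext fun i => i.elim0⟩
      exact hiso _ _ (subsingletonLEquiv R ↥(⊥ : Submodule R M) (Fin 0 → W)) hbot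
    | succ k ih =>
      intro W _ _ hW
      exact hiso _ _ (piFinSuccLEquiv R W k).symm (hprod W (Fin k → W) hW (ih W hW))
  haveI : Module.Finite R M := hfg M hM
  haveI : IsNoetherian R M := inferInstance
  -- Noetherian induction on N
  induction N using IsNoetherian.induction with
  | _ N IH =>
  by_cases hNtop : N = ⊤
  · subst hNtop
    exact hiso M _ (Submodule.topEquiv).symm hM
  · obtain ⟨x, hxM, hxN⟩ := SetLike.exists_of_lt (lt_of_le_of_ne le_top hNtop :
      N < (⊤ : Submodule R M))
    clear hxM
    -- L = N + Rx
    set L : Submodule R M := N ⊔ Submodule.span R {x} with hLdef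
    have hxL : x ∈ L := Submodule.mem_sup_right (Submodule.mem_span_singleton_self x)
    have hNleL : N ≤ L := le_sup_left
    have hNL : N < L := lt_of_le_of_ne hNleL (fun h => hxN (h ▸ hxL))
    have hXL : X ↥L := IH L hNL
    -- q = (N : x), finitely generated
    set q : Ideal R := N.comap (LinearMap.toSpanSingleton R M x) with hqdef
    obtain ⟨n, r, hr⟩ := Submodule.fg_iff_exists_fin_generating_family.1
      (IsNoetherian.noetherian q)
    have hrq : ∀ i, r i ∈ q := fun i => by
      rw [← hr]; exact Submodule.subset_span ⟨i, rfl⟩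
    -- the map G : L^n → M, (l i) ↦ ∑ r i • l i ; P is its image
    set G : (Fin n → ↥L) →ₗ[R] M :=
      ∑ i : Fin n, (r i) • (L.subtype.comp (LinearMap.proj i)) with hGdef
    have hGapply : ∀ l : Fin n → ↥L, G l = ∑ i : Fin n, r i • ((l i : M)) := by
      intro l
      rw [hGdef]
      simp [LinearMap.sum_apply]
    set P : Submodule R M := LinearMap.range G with hPdef
    have hXP : X ↥P := himg (Fin n → ↥L) M G (hpi n ↥L hXL) hM
    -- P ≤ N
    have hPN : P ≤ N := by
      rintro _ ⟨l, rfl⟩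
      rw [hGapply]
      refine Submodule.sum_mem N fun i _ => ?_
      obtain ⟨u, hu, v, hv, huv⟩ := Submodule.mem_sup.1 (l i).2
      obtain ⟨s, rfl⟩ := Submodule.mem_span_singleton.1 hv
      rw [← huv, smul_add, smul_comm (r i) s x]
      exact Submodule.add_mem N (Submodule.smul_mem N _ hu)
        (Submodule.smul_mem N s (hrq i))
    -- q • x ⊆ P
    have hqxP : ∀ s : R, s • x ∈ N → s • x ∈ P := by
      intro s hs
      have hsq : s ∈ q := hs
      rw [← hr] at hsq
      obtain ⟨c, hc⟩ := (mem_span_range_iff_exists_fun R).1 hsq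
      refine ⟨fun i => c i • ⟨x, hxL⟩, ?_⟩
      rw [hGapply]
      calc ∑ i : Fin n, r i • ((c i • (⟨x, hxL⟩ : ↥L) : ↥L) : M)
          = ∑ i : Fin n, (c i • r i) • x := by
            refine Finset.sum_congr rfl fun i _ => ?_
            simp [smul_smul, mul_comm]
        _ = s • x := by rw [← Finset.sum_smul, hc]
    -- K = P + Rx
    set K : Submodule R M := P ⊔ Submodule.span R {x} with hKdef
    have hKL : K ≤ L := sup_le (hPN.trans hNleL) le_sup_right
    have hinf : N ⊓ K = P := by
      refine le_antisymm ?_ (le_inf hPN le_sup_left)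
      rintro v ⟨hvN, hvK⟩
      obtain ⟨p, hp, w, hw, hpw⟩ := Submodule.mem_sup.1 hvK
      obtain ⟨s, rfl⟩ := Submodule.mem_span_singleton.1 hw
      have hsxN : s • x ∈ N := by
        have : s • x = v - p := by rw [← hpw]; abel
        rw [this]
        exact Submodule.sub_mem N hvN (hPN hp)
      have := hqxP s hsxN
      rw [← hpw]
      exact Submodule.add_mem P hp this
    have hsup : N ⊔ K = L := by
      rw [hKdef, hLdef, ← sup_assoc, sup_eq_left.2 hPN]
    -- the exact sequence 0 → P → N × K → L → 0
    set f : ↥P →ₗ[R] ↥N × ↥K :=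
      (Submodule.inclusion hPN).prod (Submodule.inclusion le_sup_left) with hfdef
    set g : ↥N × ↥K →ₗ[R] ↥L :=
      (Submodule.inclusion hNleL).comp (LinearMap.fst R ↥N ↥K) -
      (Submodule.inclusion hKL).comp (LinearMap.snd R ↥N ↥K) with hgdef
    have hginj : Function.Injective f := by
      intro a b hab
      have := congrArg (fun z => ((z : ↥N × ↥K).1 : M)) hab
      exact Subtype.ext this
    have hgsurj : Function.Surjective g := by
      rintro ⟨v, hv⟩
      rw [← hsup] at hv
      obtain ⟨a, ha, b, hb, hab⟩ := Submodule.mem_sup.1 hv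
      refine ⟨(⟨a, ha⟩, ⟨-b, Submodule.neg_mem K hb⟩), ?_⟩
      apply Subtype.ext
      show a - (-b) = v
      rw [sub_neg_eq_add, hab]
    have hexact : Function.Exact f g := by
      intro y
      constructor
      · intro hy
        have h1 : ((y.1 : M)) = ((y.2 : M)) := by
          have := congrArg (fun z : ↥L => (z : M)) hy
          simpa [hgdef, sub_eq_zero] using this
        have hmem : (y.1 : M) ∈ N ⊓ K := ⟨y.1.2, h1 ▸ y.2.2⟩
        rw [hinf] at hmem
        refine ⟨⟨(y.1 : M), hmem⟩, ?_⟩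
        apply Prod.ext
        · exact Subtype.ext rfl
        · exact Subtype.ext h1
      · rintro ⟨p, rfl⟩
        apply Subtype.ext
        show ((p : M)) - ((p : M)) = (0 : M)
        rw [sub_self]
    have hXB : X (↥N × ↥K) := hext ↥P (↥N × ↥K) ↥L f g hginj hgsurj hexact hXP hXL
    -- N is the image of the projection N × K → M
    have hrange : LinearMap.range (N.subtype.comp (LinearMap.fst R ↥N ↥K)) = N := by
      rw [LinearMap.range_comp, LinearMap.range_eq_top.2 LinearMap.fst_surjective,
        Submodule.map_subtype_top]
    have hfin := himg (↥N × ↥K) M (N.subtype.comp (LinearMap.fst R ↥N ↥K)) hXB hM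
    rwa [hrange] at hfin
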